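/- Let S be an ordered semigroup satisfying axioms O1–O5 and let s, t ∈ S. Then λ(s) ≤ λ(t) for every functional λ on S if and only if for every ε > 0 and every s' ∈ S with s' ≪ s there exist positive integers M, N with M/N > 1 − ε and M s' ≤ N t (where M s' denotes the M-fold sum of s' and N t the N-fold sum of t). -/

import Mathlib

open scoped ENNReal

/-- `CC s t` : `s` is (sequentially) compactly contained in `t`, written `s ≪ t`. -/
def CC {S : Type*} [AddCommMonoid S] [PartialOrder S] (s t : S) : Prop :=
  ∀ u : ℕ → S, Monotone u → ∀ x : S, IsLUB (Set.range u) x → t ≤ x → ∃ n, s ≤ u n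

/-- An ordered semigroup (positive, with translation invariant order) satisfying axioms O1-O5. -/
structure CuO5 (S : Type*) [AddCommMonoid S] [PartialOrder S] : Prop where
  addRightMono : ∀ {s t : S}, s ≤ t → ∀ r : S, s + r ≤ t + r
  zeroLe : ∀ s : S, 0 ≤ s
  O1 : ∀ u : ℕ → S, Monotone u → ∃ x : S, IsLUB (Set.range u) x
  O2 : ∀ s : S, ∃ u : ℕ → S, (∀ n, CC (u n) (u (n + 1))) ∧ IsLUB (Set.range u) s
  O3 : ∀ {s₁ t₁ s₂ t₂ : S}, CC s₁ t₁ → CC s₂ t₂ → CC (s₁ + s₂) (t₁ + t₂)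
  O4 : ∀ u v : ℕ → S, Monotone u → Monotone v → ∀ x y : S,
    IsLUB (Set.range u) x → IsLUB (Set.range v) y →
    IsLUB (Set.range fun n => u n + v n) (x + y)
  O5 : ∀ {s' s t : S}, CC s' s → s ≤ t → ∃ r : S, s' + r ≤ t ∧ t ≤ s + r

/-- Axioms O1-O6. -/
structure CuO6 (S : Type*) [AddCommMonoid S] [PartialOrder S] extends CuO5 S : Prop where
  O6 : ∀ {s r t : S}, s ≤ r + t → ∀ {s' : S}, CC s' s →
    ∃ r' t' : S, s' ≤ r' + t' ∧ r' ≤ r ∧ r' ≤ s ∧ t' ≤ t ∧ t' ≤ s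

/-- A functional on `S`: additive, order preserving, zero preserving map to `[0,∞]`
preserving suprema of increasing sequences. -/
structure IsFunctional {S : Type*} [AddCommMonoid S] [PartialOrder S] (l : S → ℝ≥0∞) : Prop where
  map_zero : l 0 = 0
  map_add : ∀ s t : S, l (s + t) = l s + l t
  mono : ∀ {s t : S}, s ≤ t → l s ≤ l t
  map_sup : ∀ u : ℕ → S, Monotone u → ∀ x : S, IsLUB (Set.range u) x → l x = ⨆ n, l (u n)

/-- Real multiplication on `S` : a map `(0,∞] × S → S` additive, order preserving and
sup-(of increasing sequences)-preserving in each variable, with `1 · s = s`.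
Scalars are elements of `ℝ≥0∞` required to be positive. -/
structure RealMul (S : Type*) [AddCommMonoid S] [PartialOrder S] where
  smul : ℝ≥0∞ → S → S
  add_left : ∀ {a b : ℝ≥0∞}, 0 < a → 0 < b → ∀ s : S, smul (a + b) s = smul a s + smul b s
  add_right : ∀ {a : ℝ≥0∞}, 0 < a → ∀ s t : S, smul a (s + t) = smul a s + smul a t
  mono_left : ∀ {a b : ℝ≥0∞}, 0 < a → a ≤ b → ∀ s : S, smul a s ≤ smul b s
  mono_right : ∀ {a : ℝ≥0∞}, 0 < a → ∀ {s t : S}, s ≤ t → smul a s ≤ smul a t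
  sup_left : ∀ u : ℕ → ℝ≥0∞, Monotone u → 0 < u 0 → ∀ s : S,
    IsLUB (Set.range fun n => smul (u n) s) (smul (⨆ n, u n) s)
  sup_right : ∀ {a : ℝ≥0∞}, 0 < a → ∀ u : ℕ → S, Monotone u → ∀ x : S,
    IsLUB (Set.range u) x → IsLUB (Set.range fun n => smul a (u n)) (smul a x)
  one_smul : ∀ s : S, smul 1 s = s

/-- `D` is a dense subset of `S`: every element of `S` is the supremum of a rapidly
increasing sequence of elements of `D`. -/
def IsDenseSub {S : Type*} [AddCommMonoid S] [PartialOrder S] (D : Set S) : Prop :=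
  ∀ s : S, ∃ u : ℕ → S, (∀ n, u n ∈ D) ∧ (∀ n, CC (u n) (u (n + 1))) ∧ IsLUB (Set.range u) s

/-- `m` is the least upper bound of the functionals `l₁` and `l₂` in `F(S)`
(pointwise order). -/
def IsFSup {S : Type*} [AddCommMonoid S] [PartialOrder S] (l₁ l₂ m : S → ℝ≥0∞) : Prop :=
  IsFunctional m ∧ (∀ s, l₁ s ≤ m s) ∧ (∀ s, l₂ s ≤ m s) ∧
    ∀ d : S → ℝ≥0∞, IsFunctional d → (∀ s, l₁ s ≤ d s) → (∀ s, l₂ s ≤ d s) → ∀ s, m s ≤ d s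

/-- `m` is the greatest lower bound of the functionals `l₁` and `l₂` in `F(S)`
(pointwise order). -/
def IsFInf {S : Type*} [AddCommMonoid S] [PartialOrder S] (l₁ l₂ m : S → ℝ≥0∞) : Prop :=
  IsFunctional m ∧ (∀ s, m s ≤ l₁ s) ∧ (∀ s, m s ≤ l₂ s) ∧
    ∀ d : S → ℝ≥0∞, IsFunctional d → (∀ s, d s ≤ l₁ s) → (∀ s, d s ≤ l₂ s) → ∀ s, d s ≤ m s

/-- An isomorphism of ordered semigroups between `S` and the extended natural numbers. -/
def IsOrdSemigroupIso {S : Type*} [AddCommMonoid S] [PartialOrder S] (e : S ≃ ℕ∞) : Prop :=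
  (∀ a b : S, e (a + b) = e a + e b) ∧ e 0 = 0 ∧ ∀ a b : S, a ≤ b ↔ e a ≤ e b

/-!
Easy direction: `M • s' ≤ N • t` gives `M λ(s') ≤ N λ(t)`, and `λ(s)` is the supremum of
`λ(s')` over `s' ≪ s` by (O2).

Hard direction: suppose `s' ≪ s` and every `M • s' ≤ N • t` has `M ≤ δ N`, with `δ < 1`.
It suffices to find an additive monotone `μ : S → [0,∞]` with `μ t < μ s'`: by (O2)–(O4) its
regularization `x ↦ ⨆_{z ≪ x} μ z` is a functional, below `μ` and at least `μ s'` at `s`.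
If `s'` is below no multiple of `t`, let `μ` be `0` below multiples of `t` and `∞` elsewhere.
Otherwise extend the state `n • t ↦ n`, as in the Hahn–Banach theorem, one element at a time
and then by Zorn, first giving `s'` its largest admissible value, which the `δ`-bound keeps
at least `δ⁻¹ > 1`. As `S` is not cancellative, states are only required to be monotone for
`x + r ≤ y + r` with `r` below a multiple of `t`; this is what makes each extension step work.
-/

lemma CuO5.isOrderedAddMonoid {S : Type*} [AddCommMonoid S] [PartialOrder S] (hS : CuO5 S) :
    IsOrderedAddMonoid S where
  add_le_add_left _ _ h c := hS.addRightMono h c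

lemma le_of_forall_nat_mul_le_mul_add {a b C : ℝ} (h : ∀ j : ℕ, 0 < j → j * a ≤ j * b + C) :
    a ≤ b := by
  by_contra! hba
  obtain ⟨j, hj⟩ := exists_nat_gt (max 0 (C / (a - b)))
  have hj0 : (0 : ℝ) < j := (le_max_left _ _).trans_lt hj
  have hCj : C < j * (a - b) := by
    have := (le_max_right _ _).trans_lt hj
    rwa [div_lt_iff₀ (by linarith)] at this
  have := h j (by exact_mod_cast hj0)
  nlinarith

section OrderedMonoid

variable {S : Type*} [AddCommMonoid S] [PartialOrder S] [IsOrderedAddMonoid S]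

def multBounded (t : S) : AddSubmonoid S where
  carrier := {x | ∃ n : ℕ, x ≤ n • t}
  zero_mem' := ⟨0, by simp⟩
  add_mem' := fun ⟨m, hm⟩ ⟨n, hn⟩ => ⟨m + n, add_nsmul t m n ▸ add_le_add hm hn⟩

lemma self_mem_multBounded (t : S) : t ∈ multBounded t := ⟨1, by simp⟩

lemma mem_multBounded_of_le {t x y : S} (hxy : x ≤ y) (hy : y ∈ multBounded t) :
    x ∈ multBounded t :=
  hy.imp fun _ hn => hxy.trans hn

lemma nsmul_add_le_nsmul_add {x y w : S} (h : x + w ≤ y + w) (j : ℕ) :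
    j • x + w ≤ j • y + w := by
  induction j with
  | zero => simp
  | succ j ih =>
    calc (j + 1) • x + w = j • x + (x + w) := by rw [succ_nsmul]; abel
    _ ≤ j • x + (y + w) := by gcongr
    _ = y + (j • x + w) := by abel
    _ ≤ y + (j • y + w) := by gcongr
    _ = (j + 1) • y + w := by rw [succ_nsmul]; abel

def IsRatioBound (δ : ℝ) (s' t : S) : Prop :=
  ∀ M N : ℕ, 0 < M → 0 < N → M • s' ≤ N • t → (M : ℝ) ≤ δ * N

variable {δ : ℝ} {s' t : S}

lemma IsRatioBound.pos (hδ : IsRatioBound δ s' t) (hpos : ∀ x : S, 0 ≤ x)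
    (hs' : s' ∈ multBounded t) : 0 < δ := by
  obtain ⟨N, hN⟩ := hs'
  have := hδ 1 (N + 1) one_pos N.succ_pos
    (by simpa using hN.trans (nsmul_le_nsmul_left (hpos t) N.le_succ))
  push_cast at this
  nlinarith

lemma IsRatioBound.le_mul_of_add_le_add (hδ : IsRatioBound δ s' t) (hpos : ∀ x : S, 0 ≤ x)
    {d e : ℕ} (hd : 0 < d) {w : S} (hw : w ∈ multBounded t) (h : d • s' + w ≤ e • t + w) :
    (d : ℝ) ≤ δ * e := by
  obtain ⟨W, hW⟩ := hw
  refine le_of_forall_nat_mul_le_mul_add (C := δ * (W + 1)) fun j hj => ?_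
  have hle : (j * d) • s' ≤ (j * e + (W + 1)) • t :=
    calc (j * d) • s' = j • (d • s') := mul_nsmul' _ _ _
    _ ≤ j • (d • s') + w := le_add_of_nonneg_right (hpos w)
    _ ≤ j • (e • t) + w := nsmul_add_le_nsmul_add h j
    _ ≤ (j * e) • t + (W + 1) • t := by
        rw [mul_nsmul']
        gcongr
        exact hW.trans (nsmul_le_nsmul_left (hpos t) W.le_succ)
    _ = (j * e + (W + 1)) • t := (add_nsmul _ _ _).symm
  have := hδ _ _ (Nat.mul_pos hj hd) (by omega) hle
  push_cast at this
  linarith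

lemma IsRatioBound.le_of_nsmul_add_le (hδ : IsRatioBound δ s' t) (hpos : ∀ x : S, 0 ≤ x)
    (hs' : s' ∈ multBounded t) {k k' : ℕ} {r : S} (hr : r ∈ multBounded t)
    (h : k • t + r ≤ k' • t + r) : k ≤ k' := by
  by_contra! hk
  obtain ⟨N, hN⟩ := hs'
  have hw : k' • t + r ∈ multBounded t := add_mem (nsmul_mem (self_mem_multBounded t) k') hr
  -- `t` is absorbed by `w = k' • t + r`, hence so is `s' ≤ N • t`
  have htw : t + (k' • t + r) ≤ 0 + (k' • t + r) :=
    calc t + (k' • t + r) = (k' + 1) • t + r := by rw [succ_nsmul]; abel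
    _ ≤ k • t + r := add_le_add_left (nsmul_le_nsmul_left (hpos t) hk) r
    _ ≤ 0 + (k' • t + r) := by rw [zero_add]; exact h
  have hs'w : 1 • s' + (k' • t + r) ≤ 0 • t + (k' • t + r) := by
    simpa using (add_le_add_left hN _).trans (by simpa using nsmul_add_le_nsmul_add htw N)
  have := hδ.le_mul_of_add_le_add hpos one_pos hw hs'w
  norm_num at this

lemma IsRatioBound.sub_le_mul_sub (hδ : IsRatioBound δ s' t) (hpos : ∀ x : S, 0 ≤ x)
    (hs' : s' ∈ multBounded t) {k k' n m : ℕ} {r : S} (hr : r ∈ multBounded t)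
    (hmn : m < n) (h : k • t + n • s' + r ≤ k' • t + m • s' + r) :
    (n - m : ℝ) ≤ δ * (k' - k) := by
  have hns' : n • s' + r ∈ multBounded t := add_mem (nsmul_mem hs' n) hr
  have hkk' : k ≤ k' := by
    refine hδ.le_of_nsmul_add_le hpos hs' hns' ?_
    simp only [← add_assoc]
    exact h.trans (add_le_add_left (add_le_add_right (nsmul_le_nsmul_left (hpos s') hmn.le) _) r)
  obtain ⟨d, rfl⟩ := Nat.exists_eq_add_of_lt hmn
  obtain ⟨e, rfl⟩ := Nat.exists_eq_add_of_le hkk'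
  set w := k • t + m • s' + r
  have hw : w ∈ multBounded t :=
    add_mem (add_mem (nsmul_mem (self_mem_multBounded t) k) (nsmul_mem hs' m)) hr
  have hde : (d + 1) • s' + w ≤ e • t + w := by
    simp only [w, add_nsmul] at h ⊢
    convert h using 1 <;> abel
  have := hδ.le_mul_of_add_le_add hpos d.succ_pos hw hde
  push_cast at this ⊢
  linarith

end OrderedMonoid

section PartialState

variable {S : Type*} [AddCommMonoid S] [PartialOrder S] [IsOrderedAddMonoid S] {t x : S}
  {G : AddSubmonoid (S × ℝ)}

/-- `G` is the graph of a partially defined real state normalized at `t`. -/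
structure IsPartialState (t : S) (G : AddSubmonoid (S × ℝ)) : Prop where
  unit_mem : (t, 1) ∈ G
  le_of_add_le_add : ∀ p ∈ G, ∀ q ∈ G, ∀ r ∈ multBounded t, p.1 + r ≤ q.1 + r → p.2 ≤ q.2

/-- The admissible values at `x` of an extension of `G` are those below all these ratios
(and above the analogous lower ratios). -/
def upperRatios (t x : S) (G : AddSubmonoid (S × ℝ)) : Set ℝ :=
  {u | ∃ p ∈ G, ∃ q ∈ G, ∃ n m : ℕ, ∃ r ∈ multBounded t,
    m < n ∧ p.1 + n • x + r ≤ q.1 + m • x + r ∧ u = (q.2 - p.2) / (n - m)}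

lemma IsPartialState.combine (hG : IsPartialState t G) (hx : x ∈ multBounded t)
    {p q p' q' : S × ℝ} (hp : p ∈ G) (hq : q ∈ G) (hp' : p' ∈ G) (hq' : q' ∈ G)
    {n m n' m' : ℕ} {r r' : S} (hr : r ∈ multBounded t) (hr' : r' ∈ multBounded t)
    (h : p.1 + n • x + r ≤ q.1 + m • x + r) (h' : p'.1 + n' • x + r' ≤ q'.1 + m' • x + r')
    {α β : ℕ} (hαβ : α * n + β * n' = α * m + β * m') :
    α * p.2 + β * p'.2 ≤ α * q.2 + β * q'.2 := by
  have hR : (α * n + β * n') • x + (α • r + β • r') ∈ multBounded t :=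
    add_mem (nsmul_mem hx _) (add_mem (nsmul_mem hr α) (nsmul_mem hr' β))
  have hsum := add_le_add (nsmul_le_nsmul_right h α) (nsmul_le_nsmul_right h' β)
  have key := hG.le_of_add_le_add _ (add_mem (nsmul_mem hp α) (nsmul_mem hp' β))
    _ (add_mem (nsmul_mem hq α) (nsmul_mem hq' β)) _ hR (by
      simp only [Prod.fst_add, Prod.smul_fst]
      convert hsum using 1
      · simp only [nsmul_add, add_nsmul, mul_nsmul']; abel
      · rw [hαβ]; simp only [nsmul_add, add_nsmul, mul_nsmul']; abel)
  simpa only [Prod.snd_add, Prod.smul_snd, nsmul_eq_mul] using key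

lemma IsPartialState.div_le_upperRatio (hG : IsPartialState t G) (hx : x ∈ multBounded t)
    {p' q' : S × ℝ} (hp' : p' ∈ G) (hq' : q' ∈ G) {n' m' : ℕ} {r' : S}
    (hr' : r' ∈ multBounded t) (hnm' : n' < m') (h' : p'.1 + n' • x + r' ≤ q'.1 + m' • x + r')
    {u : ℝ} (hu : u ∈ upperRatios t x G) : (p'.2 - q'.2) / (m' - n') ≤ u := by
  obtain ⟨p, hp, q, hq, n, m, r, hr, hmn, h, rfl⟩ := hu
  obtain ⟨α, rfl⟩ := Nat.exists_eq_add_of_lt hnm'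
  obtain ⟨β, rfl⟩ := Nat.exists_eq_add_of_lt hmn
  -- eliminate `x` between the two comparisons
  have := hG.combine hx hp hq hp' hq' hr hr' h h' (α := α + 1) (β := β + 1) (by ring)
  push_cast at this ⊢
  rw [div_le_div_iff₀ (by linarith) (by linarith)]
  nlinarith

lemma IsPartialState.upperRatios_nonempty (hG : IsPartialState t G) (hx : x ∈ multBounded t) :
    (upperRatios t x G).Nonempty := by
  obtain ⟨R, hR⟩ := hx
  exact ⟨_, 0, zero_mem G, R • (t, 1), nsmul_mem hG.unit_mem R, 1, 0, 0, zero_mem _, one_pos,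
    by simpa using hR, rfl⟩

lemma IsPartialState.upperRatios_bddBelow (hG : IsPartialState t G) (hpos : ∀ x : S, 0 ≤ x)
    (hx : x ∈ multBounded t) : BddBelow (upperRatios t x G) :=
  ⟨0, fun _ hu => by
    simpa using hG.div_le_upperRatio hx (zero_mem G) (zero_mem G) (zero_mem _) one_pos
      (by simpa using hpos x) hu⟩

lemma IsPartialState.add_mul_le (hG : IsPartialState t G) (hpos : ∀ x : S, 0 ≤ x)
    (hx : x ∈ multBounded t) {p q : S × ℝ} (hp : p ∈ G) (hq : q ∈ G) {n m : ℕ} {r : S}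
    (hr : r ∈ multBounded t) (h : p.1 + n • x + r ≤ q.1 + m • x + r) :
    p.2 + n * sInf (upperRatios t x G) ≤ q.2 + m * sInf (upperRatios t x G) := by
  set c := sInf (upperRatios t x G)
  rcases lt_trichotomy m n with hmn | rfl | hnm
  · have hc : c ≤ (q.2 - p.2) / (n - m) :=
      csInf_le (hG.upperRatios_bddBelow hpos hx) ⟨p, hp, q, hq, n, m, r, hr, hmn, h, rfl⟩
    have hmn' : (m : ℝ) < n := by exact_mod_cast hmn
    rw [le_div_iff₀ (by linarith)] at hc
    linarith
  · have := hG.le_of_add_le_add p hp q hq (m • x + r) (add_mem (nsmul_mem hx m) hr)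
      (by simpa only [add_assoc] using h)
    linarith
  · have hc : (p.2 - q.2) / (m - n) ≤ c :=
      le_csInf (hG.upperRatios_nonempty hx) fun u hu =>
        hG.div_le_upperRatio hx hp hq hr hnm h hu
    have hnm' : (n : ℝ) < m := by exact_mod_cast hnm
    rw [div_le_iff₀ (by linarith)] at hc
    linarith

lemma IsPartialState.sup_closure (hG : IsPartialState t G) (hpos : ∀ x : S, 0 ≤ x)
    (hx : x ∈ multBounded t) :
    IsPartialState t (G ⊔ AddSubmonoid.closure {(x, sInf (upperRatios t x G))}) where
  unit_mem := AddSubmonoid.mem_sup_left hG.unit_mem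
  le_of_add_le_add := by
    rintro _ hp' _ hq' r hr h
    obtain ⟨p, hp, _, hn, rfl⟩ := AddSubmonoid.mem_sup.1 hp'
    obtain ⟨q, hq, _, hm, rfl⟩ := AddSubmonoid.mem_sup.1 hq'
    obtain ⟨n, rfl⟩ := AddSubmonoid.mem_closure_singleton.1 hn
    obtain ⟨m, rfl⟩ := AddSubmonoid.mem_closure_singleton.1 hm
    simp only [Prod.fst_add, Prod.smul_fst, Prod.snd_add, Prod.smul_snd, nsmul_eq_mul] at h ⊢
    exact hG.add_mul_le hpos hx hp hq hr h

lemma isPartialState_sSup {c : Set (AddSubmonoid (S × ℝ))} (hc : ∀ G ∈ c, IsPartialState t G)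
    (hchain : IsChain (· ≤ ·) c) (hne : c.Nonempty) : IsPartialState t (sSup c) where
  unit_mem := hne.elim fun G hG => le_sSup hG (hc G hG).unit_mem
  le_of_add_le_add := by
    intro p hp q hq r hr h
    obtain ⟨G₁, hG₁, hp⟩ := (AddSubmonoid.mem_sSup_of_directedOn hne hchain.directedOn).1 hp
    obtain ⟨G₂, hG₂, hq⟩ := (AddSubmonoid.mem_sSup_of_directedOn hne hchain.directedOn).1 hq
    obtain ⟨G, hG, h₁, h₂⟩ := hchain.directedOn G₁ hG₁ G₂ hG₂
    exact (hc G hG).le_of_add_le_add p (h₁ hp) q (h₂ hq) r hr h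

lemma IsPartialState.exists_total {G₀ : AddSubmonoid (S × ℝ)} (hG₀ : IsPartialState t G₀)
    (hpos : ∀ x : S, 0 ≤ x) :
    ∃ G, G₀ ≤ G ∧ IsPartialState t G ∧ ∀ x ∈ multBounded t, ∃ v, (x, v) ∈ G := by
  obtain ⟨G, hG₀G, hmax⟩ := zorn_le_nonempty₀ {G | IsPartialState t G}
    (fun c hc hchain G hG => ⟨sSup c, isPartialState_sSup hc hchain ⟨G, hG⟩,
      fun _ => le_sSup⟩) G₀ hG₀
  refine ⟨G, hG₀G, hmax.prop, fun x hx => ⟨_, hmax.2 (hmax.prop.sup_closure hpos hx)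
    le_sup_left (AddSubmonoid.mem_sup_right (AddSubmonoid.subset_closure rfl))⟩⟩

lemma exists_addMonoidHom_ofReal (hpos : ∀ x : S, 0 ≤ x) (f : S → ℝ)
    (hadd : ∀ x ∈ multBounded t, ∀ y ∈ multBounded t, f (x + y) = f x + f y)
    (hmono : ∀ x y, x ≤ y → y ∈ multBounded t → f x ≤ f y) :
    ∃ μ : S →+ ℝ≥0∞, Monotone μ ∧ (∀ x ∈ multBounded t, μ x = ENNReal.ofReal (f x)) ∧
      ∀ x ∉ multBounded t, μ x = ⊤ := by
  classical
  have hf0 : f 0 = 0 := by simpa using hadd 0 (zero_mem _) 0 (zero_mem _)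
  have hnonneg : ∀ x ∈ multBounded t, 0 ≤ f x := fun x hx => hf0 ▸ hmono 0 x (hpos x) hx
  have hmem_add : ∀ x y, x + y ∈ multBounded t ↔ x ∈ multBounded t ∧ y ∈ multBounded t :=
    fun x y => ⟨fun h => ⟨mem_multBounded_of_le (le_add_of_nonneg_right (hpos y)) h,
      mem_multBounded_of_le (le_add_of_nonneg_left (hpos x)) h⟩, fun h => add_mem h.1 h.2⟩
  let μ : S →+ ℝ≥0∞ :=
    { toFun x := if x ∈ multBounded t then ENNReal.ofReal (f x) else ⊤
      map_zero' := by simp [hf0, zero_mem]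
      map_add' x y := by
        by_cases hxy : x ∈ multBounded t ∧ y ∈ multBounded t
        · obtain ⟨hx, hy⟩ := hxy
          simp [hx, hy, add_mem hx hy, hadd x hx y hy,
            ENNReal.ofReal_add (hnonneg x hx) (hnonneg y hy)]
        · have hxy' : x + y ∉ multBounded t := fun h => hxy ((hmem_add x y).1 h)
          rcases not_and_or.1 hxy with h | h <;> simp [h, hxy'] }
  refine ⟨μ, fun x y hxy => ?_, fun x hx => if_pos hx, fun x hx => if_neg hx⟩
  by_cases hy : y ∈ multBounded t
  · simp only [μ, AddMonoidHom.coe_mk, ZeroHom.coe_mk, if_pos hy,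
      if_pos (mem_multBounded_of_le hxy hy)]
    exact ENNReal.ofReal_le_ofReal (hmono x y hxy hy)
  · simp [μ, hy]

lemma IsPartialState.exists_addMonoidHom (hG : IsPartialState t G) (hpos : ∀ x : S, 0 ≤ x)
    (htot : ∀ x ∈ multBounded t, ∃ v, (x, v) ∈ G) :
    ∃ μ : S →+ ℝ≥0∞, Monotone μ ∧ ∀ p ∈ G, p.1 ∈ multBounded t → μ p.1 = ENNReal.ofReal p.2 := by
  have : ∀ x, ∃ v : ℝ, x ∈ multBounded t → (x, v) ∈ G := fun x => by
    by_cases hx : x ∈ multBounded t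
    · exact (htot x hx).imp fun _ hv _ => hv
    · exact ⟨0, fun h => absurd h hx⟩
  choose f hf using this
  have hfG : ∀ p ∈ G, p.1 ∈ multBounded t → f p.1 = p.2 := fun p hp h =>
    le_antisymm (hG.le_of_add_le_add _ (hf _ h) p hp 0 (zero_mem _) le_rfl)
      (hG.le_of_add_le_add p hp _ (hf _ h) 0 (zero_mem _) le_rfl)
  obtain ⟨μ, hμ, hμf, -⟩ := exists_addMonoidHom_ofReal hpos f
    (fun x hx y hy => hfG _ (add_mem (hf x hx) (hf y hy)) (add_mem hx hy))
    (fun x y hxy hy => hG.le_of_add_le_add _ (hf x (mem_multBounded_of_le hxy hy)) _ (hf y hy)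
      0 (zero_mem _) (by simpa using hxy))
  exact ⟨μ, hμ, fun p hp h => (hμf _ h).trans (congrArg _ (hfG p hp h))⟩

end PartialState

section RatioBound

variable {S : Type*} [AddCommMonoid S] [PartialOrder S] [IsOrderedAddMonoid S] {δ : ℝ} {s' t : S}

lemma IsRatioBound.isPartialState_closure (hδ : IsRatioBound δ s' t) (hpos : ∀ x : S, 0 ≤ x)
    (hs' : s' ∈ multBounded t) : IsPartialState t (AddSubmonoid.closure {((t, 1) : S × ℝ)}) where
  unit_mem := AddSubmonoid.subset_closure rfl
  le_of_add_le_add := by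
    rintro _ hp _ hq r hr h
    obtain ⟨k, rfl⟩ := AddSubmonoid.mem_closure_singleton.1 hp
    obtain ⟨k', rfl⟩ := AddSubmonoid.mem_closure_singleton.1 hq
    simp only [Prod.smul_fst, Prod.smul_snd, nsmul_eq_mul, mul_one] at h ⊢
    exact_mod_cast hδ.le_of_nsmul_add_le hpos hs' hr h

lemma IsRatioBound.inv_le_upperRatio (hδ : IsRatioBound δ s' t) (hpos : ∀ x : S, 0 ≤ x)
    (hs' : s' ∈ multBounded t) {u : ℝ}
    (hu : u ∈ upperRatios t s' (AddSubmonoid.closure {((t, 1) : S × ℝ)})) : δ⁻¹ ≤ u := by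
  obtain ⟨_, hp, _, hq, n, m, r, hr, hmn, h, rfl⟩ := hu
  obtain ⟨k, rfl⟩ := AddSubmonoid.mem_closure_singleton.1 hp
  obtain ⟨k', rfl⟩ := AddSubmonoid.mem_closure_singleton.1 hq
  simp only [Prod.smul_fst, Prod.smul_snd, nsmul_eq_mul, mul_one] at h ⊢
  have := hδ.sub_le_mul_sub hpos hs' hr hmn h
  have hmn' : (m : ℝ) < n := by exact_mod_cast hmn
  rw [inv_eq_one_div, div_le_div_iff₀ (hδ.pos hpos hs') (by linarith)]
  linarith

lemma IsRatioBound.exists_addMonoidHom_lt (hδ : IsRatioBound δ s' t) (hδ1 : δ < 1)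
    (hpos : ∀ x : S, 0 ≤ x) : ∃ μ : S →+ ℝ≥0∞, Monotone μ ∧ μ t < μ s' := by
  by_cases hs' : s' ∈ multBounded t
  · have hG₀ := hδ.isPartialState_closure hpos hs'
    set c := sInf (upperRatios t s' (AddSubmonoid.closure {((t, 1) : S × ℝ)}))
    have hc : 1 < c := ((one_lt_inv₀ (hδ.pos hpos hs')).2 hδ1).trans_le <|
      le_csInf (hG₀.upperRatios_nonempty hs') fun u hu => hδ.inv_le_upperRatio hpos hs' hu
    obtain ⟨G, hG₁G, hG, htot⟩ := (hG₀.sup_closure hpos hs').exists_total hpos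
    obtain ⟨μ, hμ, hμG⟩ := hG.exists_addMonoidHom hpos htot
    refine ⟨μ, hμ, ?_⟩
    rw [hμG (t, 1) (hG₁G (AddSubmonoid.mem_sup_left hG₀.unit_mem)) (self_mem_multBounded t),
      hμG (s', c) (hG₁G (AddSubmonoid.mem_sup_right (AddSubmonoid.subset_closure rfl))) hs']
    exact (ENNReal.ofReal_lt_ofReal_iff (by linarith)).2 hc
  · obtain ⟨μ, hμ, hμB, hμtop⟩ :=
      exists_addMonoidHom_ofReal (t := t) hpos (fun _ => 0) (by simp) (by simp)
    exact ⟨μ, hμ, by simp [hμB t (self_mem_multBounded t), hμtop s' hs']⟩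

end RatioBound

section Functional

variable {S : Type*} [AddCommMonoid S] [PartialOrder S] {s t u x z : S}

lemma CC.le (h : CC s t) : s ≤ t := by
  obtain ⟨n, hn⟩ := h (fun _ => t) monotone_const t (by simp) le_rfl
  exact hn

lemma CC.trans_le (h : CC s t) (htu : t ≤ u) : CC s u :=
  fun v hv x hx hux => h v hv x hx (htu.trans hux)

lemma cc_zero (hS : CuO5 S) (x : S) : CC 0 x := fun _ _ _ _ _ => ⟨0, hS.zeroLe _⟩

lemma CuO5.exists_cc_seq (hS : CuO5 S) (s : S) :
    ∃ u : ℕ → S, Monotone u ∧ (∀ n, CC (u n) (u (n + 1))) ∧ (∀ n, CC (u n) s) ∧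
      IsLUB (Set.range u) s := by
  obtain ⟨u, hu, hlub⟩ := hS.O2 s
  exact ⟨u, monotone_nat_of_le_succ fun n => (hu n).le, hu,
    fun n => (hu n).trans_le (hlub.1 ⟨n + 1, rfl⟩), hlub⟩

noncomputable def regularize (μ : S → ℝ≥0∞) (x : S) : ℝ≥0∞ := ⨆ z : {z // CC z x}, μ z

lemma le_regularize (μ : S → ℝ≥0∞) (h : CC z x) : μ z ≤ regularize μ x :=
  le_iSup (fun z : {z // CC z x} => μ z) ⟨z, h⟩

lemma regularize_le {μ : S → ℝ≥0∞} (hμ : Monotone μ) (x : S) : regularize μ x ≤ μ x :=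
  iSup_le fun z => hμ z.2.le

lemma regularize_mono (μ : S → ℝ≥0∞) : Monotone (regularize μ) :=
  fun _ _ hxy => iSup_le fun z => le_regularize μ (z.2.trans_le hxy)

lemma regularize_add (hS : CuO5 S) (μ : S →+ ℝ≥0∞) (hμ : Monotone μ) (x y : S) :
    regularize μ (x + y) = regularize μ x + regularize μ y := by
  have := hS.isOrderedAddMonoid
  refine le_antisymm (iSup_le fun z => ?_) ?_
  · obtain ⟨a, ha, -, hax, haLUB⟩ := hS.exists_cc_seq x
    obtain ⟨b, hb, -, hby, hbLUB⟩ := hS.exists_cc_seq y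
    obtain ⟨n, hn⟩ := z.2 (fun n => a n + b n) (ha.add hb) _ (hS.O4 a b ha hb x y haLUB hbLUB)
      le_rfl
    calc μ z ≤ μ (a n + b n) := hμ hn
    _ = μ (a n) + μ (b n) := map_add μ _ _
    _ ≤ _ := add_le_add (le_regularize _ (hax n)) (le_regularize _ (hby n))
  · have (w : S) : Nonempty {z // CC z w} := ⟨⟨0, cc_zero hS w⟩⟩
    exact ENNReal.iSup_add_iSup_le fun z₁ z₂ =>
      (map_add μ (z₁ : S) z₂).symm.trans_le (le_regularize _ (hS.O3 z₁.2 z₂.2))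

lemma regularize_of_isLUB (hS : CuO5 S) {μ : S → ℝ≥0∞} (hμ : Monotone μ) {u : ℕ → S}
    (hu : Monotone u) (hx : IsLUB (Set.range u) x) :
    regularize μ x = ⨆ n, regularize μ (u n) := by
  refine le_antisymm (iSup_le fun z => ?_) (iSup_le fun n => regularize_mono μ (hx.1 ⟨n, rfl⟩))
  obtain ⟨v, hv, hvv, hvx, hvLUB⟩ := hS.exists_cc_seq x
  obtain ⟨k, hk⟩ := z.2 v hv x hvLUB le_rfl
  obtain ⟨j, hj⟩ := hvx (k + 1) u hu x hx le_rfl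
  calc μ z ≤ μ (v k) := hμ hk
  _ ≤ regularize μ (u j) := le_regularize μ ((hvv k).trans_le hj)
  _ ≤ ⨆ n, regularize μ (u n) := le_iSup (fun n => regularize μ (u n)) j

lemma isFunctional_regularize (hS : CuO5 S) (μ : S →+ ℝ≥0∞) (hμ : Monotone μ) :
    IsFunctional (regularize μ) where
  map_zero := le_antisymm ((regularize_le hμ 0).trans_eq (map_zero μ)) zero_le
  map_add := regularize_add hS μ hμ
  mono h := regularize_mono μ h
  map_sup _ hu _ hx := regularize_of_isLUB hS hμ hu hx

lemma exists_functional_lt (hS : CuO5 S) (μ : S →+ ℝ≥0∞) (hμ : Monotone μ) {s' : S}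
    (hs' : CC s' s) (hlt : μ t < μ s') : ∃ l, IsFunctional l ∧ l t < l s :=
  ⟨regularize μ, isFunctional_regularize hS μ hμ,
    (regularize_le hμ t).trans_lt (hlt.trans_le (le_regularize μ hs'))⟩

lemma IsFunctional.map_nsmul {l : S → ℝ≥0∞} (hl : IsFunctional l) (n : ℕ) (x : S) :
    l (n • x) = n * l x := by
  induction n with
  | zero => simp [hl.map_zero]
  | succ n ih => rw [succ_nsmul, hl.map_add, ih]; push_cast; ring

lemma IsFunctional.le_of_forall_lt_one {l : S → ℝ≥0∞} (hl : IsFunctional l)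
    (h : ∀ a : ℝ, a < 1 → ∃ M N : ℕ, 0 < N ∧ a * N < M ∧ M • s ≤ N • t) : l s ≤ l t := by
  refine ENNReal.le_of_forall_lt_one_mul_le fun a ha => ?_
  obtain ⟨M, N, hN, haMN, hle⟩ := h a.toReal (ENNReal.toReal_lt_of_lt_ofReal (by simpa using ha))
  have haN : a * N ≤ M := by
    rw [← ENNReal.ofReal_toReal ha.ne_top, ← ENNReal.ofReal_natCast N,
      ← ENNReal.ofReal_mul ENNReal.toReal_nonneg, ← ENNReal.ofReal_natCast M]
    exact ENNReal.ofReal_le_ofReal haMN.le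
  refine (ENNReal.mul_le_mul_iff_right (by exact_mod_cast hN.ne')
    (ENNReal.natCast_ne_top N)).1 ?_
  calc (N : ℝ≥0∞) * (a * l s) = a * N * l s := by ring
  _ ≤ M * l s := by gcongr
  _ = l (M • s) := (hl.map_nsmul M s).symm
  _ ≤ l (N • t) := hl.mono hle
  _ = N * l t := hl.map_nsmul N t

lemma IsFunctional.le_of_forall_cc_le (hS : CuO5 S) {l : S → ℝ≥0∞} (hl : IsFunctional l)
    (h : ∀ s', CC s' s → l s' ≤ l t) : l s ≤ l t := by
  obtain ⟨u, hu, -, hus, hlub⟩ := hS.exists_cc_seq s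
  rw [hl.map_sup u hu s hlub]
  exact iSup_le fun n => h _ (hus n)

end Functional

/-- comparison by all functionals is equivalent to almost algebraic
comparison of multiples. -/
theorem functional_comparison_iff {S : Type*} [AddCommMonoid S] [PartialOrder S]
    (hS : CuO5 S) (s t : S) :
    (∀ l : S → ℝ≥0∞, IsFunctional l → l s ≤ l t) ↔
      ∀ ε : ℝ, 0 < ε → ∀ s' : S, CC s' s →
        ∃ M N : ℕ, 0 < M ∧ 0 < N ∧ (1 - ε : ℝ) < (M : ℝ) / (N : ℝ) ∧ M • s' ≤ N • t := by
  have := hS.isOrderedAddMonoid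
  constructor
  · intro h
    by_contra! hc
    obtain ⟨ε, hε, s', hs', hfail⟩ := hc
    have hδ : IsRatioBound (1 - ε) s' t := fun M N hM hN hle => by
      by_contra! hlt
      exact hfail M N hM hN (by rw [lt_div_iff₀ (by exact_mod_cast hN)]; linarith) hle
    obtain ⟨μ, hμ, hlt⟩ := hδ.exists_addMonoidHom_lt (by linarith) hS.zeroLe
    obtain ⟨l, hl, hlt⟩ := exists_functional_lt hS μ hμ hs' hlt
    exact (h l hl).not_gt hlt
  · refine fun h l hl => hl.le_of_forall_cc_le hS fun s' hs' => hl.le_of_forall_lt_one fun a ha => ?_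
    obtain ⟨M, N, -, hN, hMN, hle⟩ := h (1 - a) (by linarith) s' hs'
    rw [sub_sub_cancel, lt_div_iff₀ (by exact_mod_cast hN)] at hMN
    exact ⟨M, N, hN, hMN, hle⟩
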